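/- Let k be a field, let S = k[t_1,...,t_n] be the polynomial ring, and let F = S^m be the free S-module of rank m with standard basis e_1,...,e_m. Let R ⊆ F be an S-submodule such that F/R is a finite-dimensional k-vector space. Then there exists a finite set β of pairs (s, i), with s an exponent vector in ℕⁿ and i ∈ {1,...,m}, such that for each i the set {s : (s,i) ∈ β} is downward closed under the componentwise order, and such that the images in F/R of the monomial elements t^s · e_i with (s,i) ∈ β form a k-vector space basis of F/R. -/

import Mathlib

/-!
Order the monomial vectors `t^s e_i` by a monomial order on the exponents, ties broken by the
position `i`. This is a well-order, and multiplication by a monomial is strictly monotone for it.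
Keep those `t^s e_i` whose image in `F/R` is not in the span of the images of all smaller ones.
The kept images are linearly independent, since each one is new compared with its predecessors,
and span `F/R` by well-founded induction; so there are finitely many. If `t^u e_i` is not kept
and `u ≤ s`, multiplying its expression through smaller monomial vectors by `t^(s - u)` expresses
`t^s e_i` through smaller ones, so `t^s e_i` is not kept either.
-/

open Submodule Set MvPolynomial

section SpanJumps

variable (K : Type*) {V ι : Type*}

def spanJumps [Semiring K] [AddCommMonoid V] [Module K V] [Preorder ι] (f : ι → V) : Set ι :=
  {i | f i ∉ span K (f '' Iio i)}

variable {K}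

theorem linearIndepOn_spanJumps [DivisionRing K] [AddCommGroup V] [Module K V] [LinearOrder ι]
    (f : ι → V) : LinearIndepOn K f (spanJumps K f) := by
  classical
  refine linearIndepOn_of_finite _ fun t ht htfin => ?_
  lift t to Finset ι using htfin
  induction t using Finset.induction_on_max with
  | empty => simp
  | insert a s hlt ih =>
    rw [Finset.coe_insert] at ht ⊢
    rw [linearIndepOn_insert fun ha => (hlt a ha).false]
    exact ⟨ih ((subset_insert _ _).trans ht),
      fun hmem => ht (mem_insert a _) (span_mono (image_mono hlt) hmem)⟩

variable [Semiring K] [AddCommMonoid V] [Module K V] [Preorder ι]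

theorem span_image_spanJumps [WellFoundedLT ι] (f : ι → V) :
    span K (f '' spanJumps K f) = span K (range f) := by
  refine le_antisymm (span_mono (image_subset_range _ _)) (span_le.2 ?_)
  rintro _ ⟨i, rfl⟩
  induction i using WellFoundedLT.induction with | _ i ih
  by_cases hi : i ∈ spanJumps K f
  · exact subset_span (mem_image_of_mem f hi)
  · refine span_le.2 ?_ (not_not.1 hi)
    rintro _ ⟨j, hj, rfl⟩
    exact ih j hj

theorem mem_spanJumps_of_map {f : ι → V} {g : ι → ι} (hg : StrictMono g) (L : V →ₗ[K] V)
    (hL : ∀ j, L (f j) = f (g j)) {i : ι} (h : g i ∈ spanJumps K f) : i ∈ spanJumps K f := by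
  intro hi
  apply h
  have hLi := mem_map_of_mem (f := L) hi
  rw [← span_image, ← image_comp] at hLi
  refine span_mono ?_ (hL i ▸ hLi)
  rintro _ ⟨j, hj, rfl⟩
  exact ⟨g j, hg hj, (hL j).symm⟩

end SpanJumps

theorem Prod.Lex.strictMono_add_fst {α β : Type*} [AddCommMonoid α] [PartialOrder α]
    [IsOrderedCancelAddMonoid α] [Preorder β] (u : α) :
    StrictMono fun p : Lex (α × β) => toLex (u + (ofLex p).1, (ofLex p).2) := by
  intro p q hpq
  rcases Prod.Lex.lt_iff.1 hpq with hlt | ⟨heq, hlt⟩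
  · exact Prod.Lex.lt_iff.2 (Or.inl (add_lt_add_right hlt u))
  · exact Prod.Lex.lt_iff.2 (Or.inr ⟨congrArg (u + ·) heq, hlt⟩)

noncomputable def MonomialOrder.termOverPosition {σ : Type*} (ord : MonomialOrder σ)
    (ι : Type*) : Lex (ord.syn × ι) ≃ (σ →₀ ℕ) × ι :=
  ofLex.trans (ord.toSyn.symm.toEquiv.prodCongr (Equiv.refl ι))

section MonomialVec

variable {σ ι k : Type*} [CommSemiring k] [DecidableEq ι]

noncomputable def monomialVec (p : (σ →₀ ℕ) × ι) : ι → MvPolynomial σ k :=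
  Pi.single p.2 (monomial p.1 1)

theorem monomial_smul_monomialVec (u : σ →₀ ℕ) (p : (σ →₀ ℕ) × ι) :
    monomial u (1 : k) • (monomialVec p : ι → MvPolynomial σ k) = monomialVec (u + p.1, p.2) := by
  rw [monomialVec, monomialVec, ← Pi.single_smul, smul_eq_mul, monomial_mul, one_mul]

theorem span_range_monomialVec [Finite ι] :
    span k (range (monomialVec : (σ →₀ ℕ) × ι → ι → MvPolynomial σ k)) = ⊤ := by
  have := Fintype.ofFinite ι
  rw [eq_top_iff, ← (Pi.basis fun _ : ι => basisMonomials σ k).span_eq, span_le]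
  rintro _ ⟨⟨i, s⟩, rfl⟩
  exact subset_span ⟨(s, i), by simp [monomialVec, Pi.basis_apply]⟩

end MonomialVec

section Quotient

variable {σ ι k : Type*} [CommRing k] [DecidableEq ι]
  (R : Submodule (MvPolynomial σ k) (ι → MvPolynomial σ k))

theorem span_range_mkQ_monomialVec [Finite ι] :
    span k (range (R.mkQ ∘ monomialVec)) = ⊤ := by
  rw [range_comp, ← LinearMap.coe_restrictScalars k, span_image, span_range_monomialVec,
    Submodule.map_top, LinearMap.range_eq_top]
  exact R.mkQ_surjective

theorem mem_spanJumps_termOverPosition_of_le [Preorder ι] (ord : MonomialOrder σ)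
    {s t : σ →₀ ℕ} (hts : t ≤ s) (i : ι)
    (hs : (ord.termOverPosition ι).symm (s, i) ∈
      spanJumps k (R.mkQ ∘ monomialVec ∘ ord.termOverPosition ι)) :
    (ord.termOverPosition ι).symm (t, i) ∈
      spanJumps k (R.mkQ ∘ monomialVec ∘ ord.termOverPosition ι) := by
  refine mem_spanJumps_of_map (Prod.Lex.strictMono_add_fst (ord.toSyn (s - t)))
    ((LinearMap.lsmul (MvPolynomial σ k) _ (monomial (s - t) 1)).restrictScalars k)
    (fun q => ?_) ?_
  · simp [MonomialOrder.termOverPosition, ← Submodule.Quotient.mk_smul, monomial_smul_monomialVec]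
  · convert hs
    simp [MonomialOrder.termOverPosition, ← map_add, tsub_add_cancel_of_le hts]

end Quotient

theorem exists_downwardClosed_monomialVec_basis {σ ι k : Type*} [Field k] [LinearOrder ι]
    [Finite ι] (R : Submodule (MvPolynomial σ k) (ι → MvPolynomial σ k)) (ord : MonomialOrder σ) :
    ∃ B : Set ((σ →₀ ℕ) × ι), (∀ p ∈ B, ∀ t ≤ p.1, (t, p.2) ∈ B) ∧
      LinearIndepOn k (R.mkQ ∘ monomialVec) B ∧ span k ((R.mkQ ∘ monomialVec) '' B) = ⊤ := by
  set e := ord.termOverPosition ι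
  refine ⟨e '' spanJumps k (R.mkQ ∘ monomialVec ∘ e), fun p hp t ht => ?_, ?_, ?_⟩
  · rw [mem_image_equiv] at hp ⊢
    exact mem_spanJumps_termOverPosition_of_le R ord ht p.2 hp
  · exact (linearIndepOn_spanJumps _).image_of_comp _ _
  · rw [← image_comp, Function.comp_assoc, span_image_spanJumps, ← Function.comp_assoc,
      e.surjective.range_comp, span_range_mkQ_monomialVec]

/-- For a submodule `R` of the free module `F = S^m` over
`S = k[t_1,...,t_n]` with `F/R` finite-dimensional over the field `k`, there is a
finite set `β` of pairs (exponent vector, coordinate index), downward closed in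
each coordinate, whose monomial elements `t^s · e_i` map to a `k`-basis of `F/R`. -/
theorem stmt3 {k : Type*} [Field k] {n m : ℕ}
    (R : Submodule (MvPolynomial (Fin n) k) (Fin m → MvPolynomial (Fin n) k))
    (hfd : FiniteDimensional k ((Fin m → MvPolynomial (Fin n) k) ⧸ R)) :
    ∃ β : Finset ((Fin n →₀ ℕ) × Fin m),
      (∀ p ∈ β, ∀ t : Fin n →₀ ℕ, t ≤ p.1 → (t, p.2) ∈ β) ∧
      LinearIndependent k (fun p : β => Submodule.Quotient.mk (p := R)
        (Pi.single p.1.2 (MvPolynomial.monomial p.1.1 (1 : k)))) ∧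
      Submodule.span k (Set.range (fun p : β => Submodule.Quotient.mk (p := R)
        (Pi.single p.1.2 (MvPolynomial.monomial p.1.1 (1 : k))))) = ⊤ := by
  obtain ⟨B, hdown, hli, hspan⟩ := exists_downwardClosed_monomialVec_basis R MonomialOrder.lex
  have hfin : B.Finite := finite_coe_iff.1 hli.finite
  refine ⟨hfin.toFinset, ?_, ?_, ?_⟩
  · simpa only [hfin.mem_toFinset] using hdown
  · rwa [← hfin.coe_toFinset] at hli
  · rwa [← hfin.coe_toFinset, image_eq_range] at hspan
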